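/- arXiv:1712.02056 — 2 statements merged into one kernel-verified Lean document; each statement's English description precedes it below -/
import Mathlib

section
/- For ω ∈ (−1,1), let φ_ω(x) = √(2(1−ω²)) · sech(√(1−ω²)·x), φ₀ = φ_{ω=0}, and set E(Φ_ω) = ½(1+ω²)·∫φ_ω² + ½∫(φ_ω')² − ¼∫φ_ω⁴ and Q(Φ_ω) = ω·∫φ_ω². Then 3·E(Φ_ω) − 4ω·Q(Φ_ω) = (1−2ω²)·∫φ_ω² = (1−2ω²)·√(1−ω²)·∫φ₀². -/
/-!
Write `k = √(1 - ω²)`, so that `φ_ω(x) = √2 k sech(k x)`. Rescaling `x ↦ k x` reduces every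
integral to `∫ sech² = 2` and `∫ sech⁴ = 4/3`, whose antiderivatives are `tanh` and
`tanh - tanh³/3`; for the kinetic term, `(φ_ω')² = 2k⁴ (sech² - sech⁴)(k x)` because
`sinh² = cosh² - 1`. This gives `∫ φ_ω² = 4k`, `∫ (φ_ω')² = 4k³/3` and `∫ φ_ω⁴ = 16k³/3`, and the
identity follows from `k² = 1 - ω²`.
-/
open Real Set MeasureTheory

/-- The ground-state soliton of the KGZ standing-wave equation. -/
noncomputable def phiSol (ω : ℝ) (x : ℝ) : ℝ :=
  Real.sqrt (2 * (1 - ω ^ 2)) * (1 / Real.cosh (Real.sqrt (1 - ω ^ 2) * x))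

open Filter Topology

theorem hasDerivAt_tanh (x : ℝ) : HasDerivAt tanh ((cosh x)⁻¹ ^ 2) x := by
  have h := (hasDerivAt_sinh x).div (hasDerivAt_cosh x) (cosh_pos x).ne'
  rw [show sinh / cosh = tanh from funext fun y ↦ (tanh_eq_sinh_div_cosh y).symm] at h
  refine h.congr_deriv ?_
  field_simp
  exact cosh_sq_sub_sinh_sq x

theorem tanh_eq_one_sub (x : ℝ) : tanh x = 1 - 2 * (exp (2 * x) + 1)⁻¹ := by
  rw [tanh_eq, exp_neg, show 2 * x = x + x by ring, exp_add]
  field_simp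
  ring

theorem tendsto_tanh_atTop : Tendsto tanh atTop (𝓝 1) := by
  have h : Tendsto (fun x : ℝ ↦ exp (2 * x) + 1) atTop atTop :=
    tendsto_atTop_add_const_right _ 1
      (tendsto_exp_atTop.comp (tendsto_id.const_mul_atTop two_pos))
  simpa [← funext tanh_eq_one_sub] using (h.inv_tendsto_atTop.const_mul 2).const_sub 1

theorem tendsto_tanh_atBot : Tendsto tanh atBot (𝓝 (-1)) := by
  simpa [Function.comp_def] using (tendsto_tanh_atTop.comp tendsto_neg_atBot_atTop).neg

theorem one_add_sq_le_cosh_sq (x : ℝ) : 1 + x ^ 2 ≤ cosh x ^ 2 := by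
  have h : |x| ≤ |sinh x| := by
    rw [abs_sinh]
    exact self_le_sinh_iff.mpr (abs_nonneg x)
  linarith [cosh_sq' x, sq_le_sq.mpr h]

theorem inv_cosh_le_one (x : ℝ) : (cosh x)⁻¹ ≤ 1 :=
  inv_le_one_of_one_le₀ (one_le_cosh x)

theorem integrable_inv_cosh_pow {n : ℕ} (hn : 2 ≤ n) :
    Integrable fun x ↦ (cosh x)⁻¹ ^ n := by
  refine integrable_inv_one_add_sq.mono' (by fun_prop) (ae_of_all _ fun x ↦ ?_)
  have h0 : 0 ≤ (cosh x)⁻¹ := inv_nonneg.mpr (cosh_pos x).le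
  calc ‖(cosh x)⁻¹ ^ n‖ = (cosh x)⁻¹ ^ n := by rw [norm_pow, Real.norm_of_nonneg h0]
    _ ≤ (cosh x)⁻¹ ^ 2 := pow_le_pow_of_le_one h0 (inv_cosh_le_one x) hn
    _ = (cosh x ^ 2)⁻¹ := inv_pow _ _
    _ ≤ (1 + x ^ 2)⁻¹ := inv_anti₀ (by positivity) (one_add_sq_le_cosh_sq x)

theorem integral_inv_cosh_sq : ∫ x, (cosh x)⁻¹ ^ 2 = 2 := by
  rw [integral_of_hasDerivAt_of_tendsto hasDerivAt_tanh (integrable_inv_cosh_pow le_rfl)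
    tendsto_tanh_atBot tendsto_tanh_atTop]
  norm_num

theorem integral_inv_cosh_pow_four : ∫ x, (cosh x)⁻¹ ^ 4 = 4 / 3 := by
  have hderiv (x : ℝ) : HasDerivAt (fun y ↦ tanh y - tanh y ^ 3 / 3) ((cosh x)⁻¹ ^ 4) x := by
    refine ((hasDerivAt_tanh x).sub (((hasDerivAt_tanh x).pow 3).div_const 3)).congr_deriv ?_
    have hc := (cosh_pos x).ne'
    rw [tanh_eq_sinh_div_cosh]
    push_cast
    field_simp
    exact cosh_sq_sub_sinh_sq x
  rw [integral_of_hasDerivAt_of_tendsto hderiv (integrable_inv_cosh_pow (by norm_num))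
    (tendsto_tanh_atBot.sub ((tendsto_tanh_atBot.pow 3).div_const 3))
    (tendsto_tanh_atTop.sub ((tendsto_tanh_atTop.pow 3).div_const 3))]
  norm_num

section SechProfile

variable (a k : ℝ)

theorem integral_mul_inv_cosh_mul_pow (n : ℕ) :
    ∫ x, (a * (cosh (k * x))⁻¹) ^ n = a ^ n * |k|⁻¹ * ∫ y, (cosh y)⁻¹ ^ n := by
  simp_rw [mul_pow]
  rw [integral_const_mul, Measure.integral_comp_mul_left (fun y ↦ (cosh y)⁻¹ ^ n), smul_eq_mul,
    abs_inv, mul_assoc]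

theorem hasDerivAt_mul_inv_cosh_mul (x : ℝ) :
    HasDerivAt (fun x ↦ a * (cosh (k * x))⁻¹)
      (-(a * k) * sinh (k * x) * (cosh (k * x))⁻¹ ^ 2) x := by
  have hlin : HasDerivAt (fun x ↦ k * x) k x := by simpa using (hasDerivAt_id x).const_mul k
  have hcosh : HasDerivAt (fun x ↦ cosh (k * x)) (sinh (k * x) * k) x :=
    (hasDerivAt_cosh (k * x)).comp x hlin
  refine ((hcosh.inv (cosh_pos _).ne').const_mul a).congr_deriv ?_
  ring

theorem integral_deriv_mul_inv_cosh_mul_sq :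
    ∫ x, deriv (fun x ↦ a * (cosh (k * x))⁻¹) x ^ 2 = 2 / 3 * a ^ 2 * |k| := by
  set g : ℝ → ℝ := fun y ↦ (cosh y)⁻¹ ^ 2 - (cosh y)⁻¹ ^ 4
  have hpoint (x : ℝ) : deriv (fun x ↦ a * (cosh (k * x))⁻¹) x ^ 2 = (a * k) ^ 2 * g (k * x) := by
    have hc := (cosh_pos (k * x)).ne'
    rw [(hasDerivAt_mul_inv_cosh_mul a k x).deriv]
    simp only [g]
    field_simp
    linear_combination -(a * k) ^ 2 * cosh_sq' (k * x)
  have hg : ∫ y, g y = 2 / 3 := by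
    rw [integral_sub (integrable_inv_cosh_pow le_rfl) (integrable_inv_cosh_pow (by norm_num)),
      integral_inv_cosh_sq, integral_inv_cosh_pow_four]
    norm_num
  simp_rw [hpoint]
  rw [integral_const_mul, Measure.integral_comp_mul_left g, smul_eq_mul, hg, abs_inv, mul_pow,
    ← sq_abs k]
  linear_combination 2 / 3 * a ^ 2 * mul_self_mul_inv |k|

end SechProfile

theorem phiSol_eq (ω : ℝ) :
    phiSol ω = fun x ↦ √2 * √(1 - ω ^ 2) * (cosh (√(1 - ω ^ 2) * x))⁻¹ := by
  ext x
  rw [phiSol, sqrt_mul zero_le_two, one_div]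

theorem integral_phiSol_sq (ω : ℝ) : ∫ x, phiSol ω x ^ 2 = 4 * √(1 - ω ^ 2) := by
  simp only [phiSol_eq]
  rw [integral_mul_inv_cosh_mul_pow, integral_inv_cosh_sq, abs_of_nonneg (sqrt_nonneg _), mul_pow,
    sq_sqrt zero_le_two]
  linear_combination 4 * mul_self_mul_inv √(1 - ω ^ 2)

theorem integral_phiSol_pow_four (ω : ℝ) :
    ∫ x, phiSol ω x ^ 4 = 16 / 3 * √(1 - ω ^ 2) ^ 3 := by
  simp only [phiSol_eq]
  rw [integral_mul_inv_cosh_mul_pow, integral_inv_cosh_pow_four, abs_of_nonneg (sqrt_nonneg _),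
    mul_pow, show √2 ^ 4 = (√2 ^ 2) ^ 2 by ring, sq_sqrt zero_le_two]
  linear_combination 16 / 3 * √(1 - ω ^ 2) ^ 2 * mul_self_mul_inv √(1 - ω ^ 2)

theorem integral_deriv_phiSol_sq (ω : ℝ) :
    ∫ x, deriv (phiSol ω) x ^ 2 = 4 / 3 * √(1 - ω ^ 2) ^ 3 := by
  rw [phiSol_eq, integral_deriv_mul_inv_cosh_mul_sq, abs_of_nonneg (sqrt_nonneg _), mul_pow,
    sq_sqrt zero_le_two]
  ring

/-- For `ω ∈ (-1,1)`, with `E(Φ_ω) = ½(1+ω²)∫φ_ω² + ½∫(φ_ω')² - ¼∫φ_ω⁴` and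
`Q(Φ_ω) = ω∫φ_ω²`, one has
`3E(Φ_ω) - 4ωQ(Φ_ω) = (1-2ω²)∫φ_ω² = (1-2ω²)√(1-ω²)∫φ₀²`. -/
theorem three_energy_minus_four_charge (ω : ℝ) (hω : ω ∈ Ioo (-1 : ℝ) 1)
    (E Q : ℝ)
    (hE : E = (1 / 2) * (1 + ω ^ 2) * (∫ x : ℝ, (phiSol ω x) ^ 2)
        + (1 / 2) * (∫ x : ℝ, (deriv (phiSol ω) x) ^ 2)
        - (1 / 4) * (∫ x : ℝ, (phiSol ω x) ^ 4))
    (hQ : Q = ω * ∫ x : ℝ, (phiSol ω x) ^ 2) :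
    3 * E - 4 * ω * Q = (1 - 2 * ω ^ 2) * (∫ x : ℝ, (phiSol ω x) ^ 2) ∧
    3 * E - 4 * ω * Q
      = (1 - 2 * ω ^ 2) * Real.sqrt (1 - ω ^ 2) * (∫ x : ℝ, (phiSol 0 x) ^ 2) := by
  have hk : √(1 - ω ^ 2) ^ 2 = 1 - ω ^ 2 := by
    rw [sq_sqrt]
    nlinarith [hω.1, hω.2]
  have hφ₀ : ∫ x, phiSol 0 x ^ 2 = 4 := by norm_num [integral_phiSol_sq]
  rw [hE, hQ, hφ₀, integral_phiSol_sq, integral_deriv_phiSol_sq, integral_phiSol_pow_four]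
  constructor <;> linear_combination (-2 * √(1 - ω ^ 2)) * hk
end

section
/- Let ω ∈ (−1,1) and let φ_ω(x) = √(2(1−ω²)) · sech(√(1−ω²)·x). If f : ℝ → ℂ is a C² function with f(x) → 0 and f'(x) → 0 as |x| → ∞, satisfying −f'' + (1−ω²)f − φ_ω²·f − 2φ_ω²·(Re f) = 0 on ℝ, then there exist real numbers a, b such that f = a·φ_ω' + b·(i·φ_ω). That is, the decaying solutions of this complex linearized equation form the real span of φ_ω' and iφ_ω. -/
open Real Set Filter Topology Complex

/-!
Writing `k = √(1 - ω²)` and `A² = 2k²`, the real and imaginary parts of `f` solve `u'' = q u`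
with the bounded potentials `q₊ = k² - 3φ²` and `q₋ = k² - φ²` (the operators `L₊`, `L₋`).
The soliton gives a solution of each: `L₋ φ = 0`, and differentiating it, `L₊ φ' = 0`.
The Wronskian of two solutions of `u'' = q u` is constant; for `u` decaying with its derivative
at `+∞` and a bounded partner it tends to `0`, so it vanishes. As the Cauchy data of `φ'` and
of `φ` at `0` are nonzero, the data of `u` is a multiple of them, and uniqueness for the linear
ODE makes `u` the same multiple everywhere.
-/

def SolvesLinearODE (q u u' : ℝ → ℝ) : Prop :=
  ∀ x, HasDerivAt u (u' x) x ∧ HasDerivAt u' (q x * u x) x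

def wronskian (u u' p p' : ℝ → ℝ) (x : ℝ) : ℝ :=
  u x * p' x - u' x * p x

namespace SolvesLinearODE

variable {q u u' p p' : ℝ → ℝ}

theorem sub_const_mul (hu : SolvesLinearODE q u u') (hp : SolvesLinearODE q p p') (c : ℝ) :
    SolvesLinearODE q (fun x => u x - c * p x) (fun x => u' x - c * p' x) := fun x =>
  ⟨(hu x).1.sub ((hp x).1.const_mul c),
    ((hu x).2.sub ((hp x).2.const_mul c)).congr_deriv (by ring)⟩

theorem eq_zero {Q : ℝ} (hq : ∀ x, |q x| ≤ Q) (hu : SolvesLinearODE q u u') {x₀ : ℝ}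
    (h : u x₀ = 0) (h' : u' x₀ = 0) : u = 0 := by
  let v : ℝ → ℝ × ℝ → ℝ × ℝ := fun t w => (w.2, q t * w.1)
  have hv (t : ℝ) : LipschitzWith (max 1 Q.toNNReal) (v t) := by
    refine LipschitzWith.prod_snd.prodMk (LipschitzWith.of_dist_le_mul fun w w' => ?_)
    rw [Real.dist_eq, ← mul_sub, abs_mul, ← Real.dist_eq]
    have hfst : dist w.1 w'.1 ≤ dist w w' := by
      simpa using LipschitzWith.prod_fst.dist_le_mul w w'
    exact mul_le_mul ((hq t).trans (le_coe_toNNReal Q)) hfst dist_nonneg (by positivity)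
  have hsol := ODE_solution_unique_univ (v := v) (s := fun _ => univ) (t₀ := x₀)
    (fun t => (hv t).lipschitzOnWith) (fun t => ⟨(hu t).1.prodMk (hu t).2, mem_univ _⟩)
    (fun t => ⟨(hasDerivAt_const t (0 : ℝ × ℝ)).congr_deriv
      (by simp only [v, Prod.fst_zero, Prod.snd_zero, mul_zero, Prod.mk_zero_zero]), mem_univ _⟩)
    (by simp [h, h'])
  funext x
  simpa using congrArg Prod.fst (congrFun hsol x)

theorem wronskian_eq (hu : SolvesLinearODE q u u') (hp : SolvesLinearODE q p p') (x y : ℝ) :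
    wronskian u u' p p' x = wronskian u u' p p' y := by
  have hW (t : ℝ) : HasDerivAt (wronskian u u' p p') 0 t :=
    (((hu t).1.mul (hp t).2).sub ((hu t).2.mul (hp t).1)).congr_deriv (by ring)
  exact is_const_of_deriv_eq_zero (fun t => (hW t).differentiableAt) (fun t => (hW t).deriv) x y

theorem wronskian_eq_zero (hu : SolvesLinearODE q u u') (hp : SolvesLinearODE q p p')
    (hu₀ : Tendsto u atTop (𝓝 0)) (hu'₀ : Tendsto u' atTop (𝓝 0))
    (hpb : IsBoundedUnder (· ≤ ·) atTop (norm ∘ p))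
    (hp'b : IsBoundedUnder (· ≤ ·) atTop (norm ∘ p')) (x : ℝ) :
    wronskian u u' p p' x = 0 := by
  have hlim : Tendsto (wronskian u u' p p') atTop (𝓝 0) := by
    have h := (hu₀.zero_mul_isBoundedUnder_le hp'b).sub (hu'₀.zero_mul_isBoundedUnder_le hpb)
    rwa [sub_zero] at h
  exact tendsto_nhds_unique (tendsto_const_nhds.congr (wronskian_eq hu hp x)) hlim

theorem exists_eq_const_mul_of_wronskian_eq_zero {Q : ℝ} (hq : ∀ x, |q x| ≤ Q)
    (hu : SolvesLinearODE q u u') (hp : SolvesLinearODE q p p') {x₀ : ℝ}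
    (hW : wronskian u u' p p' x₀ = 0) (hp₀ : p x₀ ≠ 0 ∨ p' x₀ ≠ 0) :
    ∃ c : ℝ, u = fun x => c * p x := by
  unfold wronskian at hW
  suffices ∃ c : ℝ, u x₀ - c * p x₀ = 0 ∧ u' x₀ - c * p' x₀ = 0 by
    obtain ⟨c, h, h'⟩ := this
    exact ⟨c, funext fun x =>
      sub_eq_zero.mp (congrFun ((hu.sub_const_mul hp c).eq_zero hq h h') x)⟩
  by_cases hpx : p x₀ = 0
  · have hp' : p' x₀ ≠ 0 := hp₀.resolve_left (not_not.mpr hpx)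
    refine ⟨u' x₀ / p' x₀, ?_, by field_simp; ring⟩
    rw [hpx, mul_zero, sub_zero]
    simpa [hpx, hp'] using hW
  · refine ⟨u x₀ / p x₀, by field_simp; ring, ?_⟩
    field_simp
    linear_combination -hW

theorem exists_eq_const_mul {Q : ℝ} (hq : ∀ x, |q x| ≤ Q)
    (hu : SolvesLinearODE q u u') (hp : SolvesLinearODE q p p')
    (hu₀ : Tendsto u atTop (𝓝 0)) (hu'₀ : Tendsto u' atTop (𝓝 0))
    (hpb : IsBoundedUnder (· ≤ ·) atTop (norm ∘ p))
    (hp'b : IsBoundedUnder (· ≤ ·) atTop (norm ∘ p')) {x₀ : ℝ} (hp₀ : p x₀ ≠ 0 ∨ p' x₀ ≠ 0) :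
    ∃ c : ℝ, u = fun x => c * p x :=
  exists_eq_const_mul_of_wronskian_eq_zero hq hu hp
    (wronskian_eq_zero hu hp hu₀ hu'₀ hpb hp'b x₀) hp₀

end SolvesLinearODE

theorem solvesLinearODE_re_im_of_deriv_deriv {f : ℝ → ℂ} (hf : ContDiff ℝ 2 f)
    {q₁ q₂ : ℝ → ℝ}
    (h : ∀ x, deriv (deriv f) x = q₂ x * f x + (q₁ x - q₂ x) * ((f x).re : ℂ)) :
    SolvesLinearODE q₁ (fun x => (f x).re) (fun x => (deriv f x).re) ∧
      SolvesLinearODE q₂ (fun x => (f x).im) (fun x => (deriv f x).im) := by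
  have hf' : Differentiable ℝ (deriv f) :=
    ((contDiff_succ_iff_deriv (n := 1)).mp hf).2.2.differentiable one_ne_zero
  refine ⟨fun x => ⟨?_, ?_⟩, fun x => ⟨?_, ?_⟩⟩
  · exact reCLM.hasFDerivAt.comp_hasDerivAt x ((hf.differentiable two_ne_zero) x).hasDerivAt
  · have := reCLM.hasFDerivAt.comp_hasDerivAt x (hf' x).hasDerivAt
    refine this.congr_deriv ?_
    simp only [h x, reCLM_apply, add_re, mul_re, ofReal_re, ofReal_im, sub_re, sub_im, sub_self,
      zero_mul, mul_zero, sub_zero]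
    ring
  · exact imCLM.hasFDerivAt.comp_hasDerivAt x ((hf.differentiable two_ne_zero) x).hasDerivAt
  · have := imCLM.hasFDerivAt.comp_hasDerivAt x (hf' x).hasDerivAt
    refine this.congr_deriv ?_
    simp [h x]

noncomputable def soliton (A k x : ℝ) : ℝ := A * (Real.cosh (k * x))⁻¹

noncomputable def solitonDeriv (A k x : ℝ) : ℝ :=
  -(A * k) * Real.sinh (k * x) / Real.cosh (k * x) ^ 2

section Soliton

variable {A k : ℝ}

theorem hasDerivAt_soliton (x : ℝ) : HasDerivAt (soliton A k) (solitonDeriv A k x) x := by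
  have hcosh := (Real.hasDerivAt_cosh (k * x)).comp x ((hasDerivAt_id x).const_mul k)
  refine ((hcosh.inv (Real.cosh_pos _).ne').const_mul A).congr_deriv ?_
  simp only [mul_one, Function.comp_apply, solitonDeriv, neg_mul]
  field_simp

theorem soliton_zero : soliton A k 0 = A := by simp [soliton]

theorem solvesLinearODE_soliton (hA : A ^ 2 = 2 * k ^ 2) :
    SolvesLinearODE (fun x => k ^ 2 - soliton A k x ^ 2) (soliton A k) (solitonDeriv A k) := by
  refine fun x => ⟨hasDerivAt_soliton x, ?_⟩
  have hsinh := (Real.hasDerivAt_sinh (k * x)).comp x ((hasDerivAt_id x).const_mul k)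
  have hcosh := (Real.hasDerivAt_cosh (k * x)).comp x ((hasDerivAt_id x).const_mul k)
  have hc := (Real.cosh_pos (k * x)).ne'
  refine ((hsinh.const_mul (-(A * k))).div (hcosh.pow 2) (pow_ne_zero 2 hc)).congr_deriv ?_
  simp only [soliton, Pi.pow_apply, Function.comp_apply, mul_one, Nat.cast_ofNat, Nat.reduceSub,
    pow_one]
  field_simp
  linear_combination A * hA - 2 * k ^ 2 * A * Real.cosh_sq (k * x)

theorem solvesLinearODE_solitonDeriv (hA : A ^ 2 = 2 * k ^ 2) :
    SolvesLinearODE (fun x => k ^ 2 - 3 * soliton A k x ^ 2) (solitonDeriv A k)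
      (fun x => (k ^ 2 - soliton A k x ^ 2) * soliton A k x) := by
  refine fun x => ⟨(solvesLinearODE_soliton hA x).2, ?_⟩
  refine ((((hasDerivAt_soliton x).pow 2).const_sub (k ^ 2)).mul
    (hasDerivAt_soliton x)).congr_deriv ?_
  simp only [Nat.cast_ofNat, Nat.add_one_sub_one, pow_one, neg_mul, Pi.pow_apply]
  ring

theorem abs_soliton_le (x : ℝ) : |soliton A k x| ≤ |A| := by
  rw [soliton, abs_mul, abs_inv, abs_of_pos (Real.cosh_pos _)]
  exact mul_le_of_le_one_right (abs_nonneg A) (inv_le_one_of_one_le₀ (Real.one_le_cosh _))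

theorem abs_solitonDeriv_le (x : ℝ) : |solitonDeriv A k x| ≤ |k| * |soliton A k x| := by
  have hc := Real.cosh_pos (k * x)
  have hs : |Real.sinh (k * x)| ≤ Real.cosh (k * x) := by
    rw [abs_le]; constructor <;> nlinarith [Real.cosh_sq (k * x)]
  rw [solitonDeriv, soliton, abs_div, abs_mul, abs_neg, abs_mul, abs_mul, abs_inv, abs_pow,
    abs_of_pos hc, div_le_iff₀ (by positivity)]
  calc |A| * |k| * |Real.sinh (k * x)| ≤ |A| * |k| * Real.cosh (k * x) := by gcongr
    _ = |k| * (|A| * (Real.cosh (k * x))⁻¹) * Real.cosh (k * x) ^ 2 := by field_simp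

theorem abs_sq_sub_mul_soliton_sq_le (c x : ℝ) :
    |k ^ 2 - c * soliton A k x ^ 2| ≤ k ^ 2 + |c| * A ^ 2 :=
  calc |k ^ 2 - c * soliton A k x ^ 2| ≤ |k ^ 2| + |c * soliton A k x ^ 2| := abs_sub _ _
    _ = k ^ 2 + |c| * soliton A k x ^ 2 := by
      rw [abs_of_nonneg (sq_nonneg k), abs_mul, abs_of_nonneg (sq_nonneg (soliton A k x))]
    _ ≤ k ^ 2 + |c| * A ^ 2 := by
      have := sq_le_sq.mpr (abs_soliton_le (A := A) (k := k) x)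
      gcongr

theorem tendsto_soliton_atTop (hk : 0 < k) : Tendsto (soliton A k) atTop (𝓝 0) := by
  have hexp : Tendsto (fun x => Real.exp (k * x) / 2) atTop atTop :=
    (Real.tendsto_exp_atTop.comp (tendsto_id.const_mul_atTop hk)).atTop_div_const two_pos
  have hcosh : Tendsto (fun x => Real.cosh (k * x)) atTop atTop :=
    tendsto_atTop_mono (fun x => by rw [Real.cosh_eq]; linarith [Real.exp_pos (-(k * x))]) hexp
  have h := hcosh.inv_tendsto_atTop.const_mul A
  rwa [mul_zero] at h

theorem tendsto_solitonDeriv_atTop (hk : 0 < k) : Tendsto (solitonDeriv A k) atTop (𝓝 0) := by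
  refine squeeze_zero_norm (fun x => abs_solitonDeriv_le x) ?_
  simpa using (tendsto_soliton_atTop hk).abs.const_mul |k|

end Soliton

namespace SolvesLinearODE

variable {A k : ℝ} {u u' : ℝ → ℝ}

theorem exists_eq_const_mul_solitonDeriv (hk : 0 < k) (hA : A ^ 2 = 2 * k ^ 2)
    (hu : SolvesLinearODE (fun x => k ^ 2 - 3 * soliton A k x ^ 2) u u')
    (hu₀ : Tendsto u atTop (𝓝 0)) (hu'₀ : Tendsto u' atTop (𝓝 0)) :
    ∃ c : ℝ, u = fun x => c * solitonDeriv A k x := by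
  have hA₀ : A ≠ 0 := by rintro rfl; nlinarith
  have hsol := tendsto_soliton_atTop (A := A) hk
  refine hu.exists_eq_const_mul (abs_sq_sub_mul_soliton_sq_le 3) (solvesLinearODE_solitonDeriv hA)
    hu₀ hu'₀ (tendsto_solitonDeriv_atTop hk).norm.isBoundedUnder_le
    ((tendsto_const_nhds.sub (hsol.pow 2)).mul hsol).norm.isBoundedUnder_le (x₀ := 0) (Or.inr ?_)
  rw [soliton_zero, hA]
  exact mul_ne_zero (by nlinarith : k ^ 2 - 2 * k ^ 2 < 0).ne hA₀

theorem exists_eq_const_mul_soliton (hk : 0 < k) (hA : A ^ 2 = 2 * k ^ 2)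
    (hu : SolvesLinearODE (fun x => k ^ 2 - soliton A k x ^ 2) u u')
    (hu₀ : Tendsto u atTop (𝓝 0)) (hu'₀ : Tendsto u' atTop (𝓝 0)) :
    ∃ c : ℝ, u = fun x => c * soliton A k x := by
  have hA₀ : A ≠ 0 := by rintro rfl; nlinarith
  refine hu.exists_eq_const_mul (by simpa using abs_sq_sub_mul_soliton_sq_le (A := A) (k := k) 1)
    (solvesLinearODE_soliton hA) hu₀ hu'₀ (tendsto_soliton_atTop hk).norm.isBoundedUnder_le
    (tendsto_solitonDeriv_atTop hk).norm.isBoundedUnder_le (x₀ := 0) (Or.inl ?_)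
  rwa [soliton_zero]

end SolvesLinearODE

theorem complex_linearized_kernel_general (ω : ℝ) (hω : ω ∈ Ioo (-1 : ℝ) 1)
    (f : ℝ → ℂ) (hC2 : ContDiff ℝ 2 f)
    (hf_top : Tendsto f atTop (𝓝 0))
    (hf'_top : Tendsto (deriv f) atTop (𝓝 0))
    (heq : ∀ x : ℝ,
      -(deriv (deriv f) x) + ((1 : ℂ) - (ω : ℂ) ^ 2) * f x
        - ((phiSol ω x : ℂ)) ^ 2 * f x - 2 * ((phiSol ω x : ℂ)) ^ 2 * ((f x).re : ℂ) = 0) :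
    ∃ a b : ℝ, f = fun x => (a : ℂ) * ((deriv (phiSol ω) x : ℝ) : ℂ)
      + (b : ℂ) * (Complex.I * (phiSol ω x : ℂ)) := by
  have hω2 : 0 < 1 - ω ^ 2 := by nlinarith [hω.1, hω.2]
  set k := √(1 - ω ^ 2)
  set A := √(2 * (1 - ω ^ 2))
  have hk : 0 < k := Real.sqrt_pos.mpr hω2
  have hk2 : k ^ 2 = 1 - ω ^ 2 := Real.sq_sqrt hω2.le
  have hA : A ^ 2 = 2 * k ^ 2 := by rw [Real.sq_sqrt (by positivity), hk2]
  have hphi : phiSol ω = soliton A k := funext fun x => by rw [phiSol, soliton, one_div]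
  have hf'' (x : ℝ) : deriv (deriv f) x = ((k ^ 2 - soliton A k x ^ 2 : ℝ) : ℂ) * f x
      + (((k ^ 2 - 3 * soliton A k x ^ 2 : ℝ) : ℂ) - ((k ^ 2 - soliton A k x ^ 2 : ℝ) : ℂ))
        * (f x).re := by
    have hk2' : (k : ℂ) ^ 2 = 1 - (ω : ℂ) ^ 2 := by exact_mod_cast hk2
    rw [← hphi]
    push_cast
    linear_combination -(heq x) - f x * hk2'
  obtain ⟨hre, him⟩ := solvesLinearODE_re_im_of_deriv_deriv hC2 hf''
  obtain ⟨a, ha⟩ := hre.exists_eq_const_mul_solitonDeriv hk hA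
    ((continuous_re.tendsto' 0 0 zero_re).comp hf_top)
    ((continuous_re.tendsto' 0 0 zero_re).comp hf'_top)
  obtain ⟨b, hb⟩ := him.exists_eq_const_mul_soliton hk hA
    ((continuous_im.tendsto' 0 0 zero_im).comp hf_top)
    ((continuous_im.tendsto' 0 0 zero_im).comp hf'_top)
  refine ⟨a, b, funext fun x => Complex.ext ?_ ?_⟩
  · simp [hphi, (hasDerivAt_soliton x).deriv, congrFun ha x]
  · simp [hphi, congrFun hb x]

/-- The decaying `C²` solutions of the complex linearized equation
`-f'' + (1-ω²)f - φ_ω²f - 2φ_ω²(Re f) = 0` form the real span of `φ_ω'` and `iφ_ω`. -/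
theorem complex_linearized_kernel (ω : ℝ) (hω : ω ∈ Ioo (-1 : ℝ) 1)
    (f : ℝ → ℂ) (hC2 : ContDiff ℝ 2 f)
    (hf_top : Tendsto f atTop (𝓝 0)) (hf_bot : Tendsto f atBot (𝓝 0))
    (hf'_top : Tendsto (deriv f) atTop (𝓝 0)) (hf'_bot : Tendsto (deriv f) atBot (𝓝 0))
    (heq : ∀ x : ℝ,
      -(deriv (deriv f) x) + ((1 : ℂ) - (ω : ℂ) ^ 2) * f x
        - ((phiSol ω x : ℂ)) ^ 2 * f x - 2 * ((phiSol ω x : ℂ)) ^ 2 * ((f x).re : ℂ) = 0) :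
    ∃ a b : ℝ, f = fun x => (a : ℂ) * ((deriv (phiSol ω) x : ℝ) : ℂ)
      + (b : ℂ) * (Complex.I * (phiSol ω x : ℂ)) :=
  complex_linearized_kernel_general ω hω f hC2 hf_top hf'_top heq
end
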